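/- Let a, b be positive integers with a dividing b. Then there is a group isomorphism H_{a,b} ≅ ((U(1) × SU(3))/Z₃) × SU(2) × ℤ_a. -/

import Mathlib

/-!
Write `b = a c`. On `U(1) × SU(2) × U(3)` the equation `λ^a (det m)^(ac) = 1` reads
`(λ (det m)^c)^a = 1`, so the shear `(λ, q, m) ↦ (q, m, λ (det m)^c)`, multiplicative because
`U(1)` is commutative, identifies `H_{a,ac}` with `SU(2) × U(3) × μ_a`, and `μ_a ≅ ℤ_a`.
Finally `(λ, s) ↦ λ s` maps `U(1) × SU(3)` onto `U(3)` with kernel `Z₃`: it is onto because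
`det m ∈ U(1)` has a cube root `w`, and `m = w · (w⁻¹ m)` with `w⁻¹ m ∈ SU(3)`.
-/

/-- `SU(n)`: the special unitary group of `n × n` complex matrices, as a group. -/
noncomputable instance SUn.instGroup (n : Type*) [DecidableEq n] [Fintype n] :
    Group (Matrix.specialUnitaryGroup n ℂ) :=
  { (inferInstance : Monoid (Matrix.specialUnitaryGroup n ℂ)) with
    inv := fun A => ⟨star A.1, by
      obtain ⟨h1, h2⟩ := Matrix.mem_specialUnitaryGroup_iff.mp A.2
      refine Matrix.mem_specialUnitaryGroup_iff.mpr ⟨Unitary.star_mem h1, ?_⟩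
      rw [Matrix.star_eq_conjTranspose, Matrix.det_conjTranspose, h2, star_one]⟩
    inv_mul_cancel := fun A =>
      Subtype.ext ((Matrix.mem_specialUnitaryGroup_iff.mp A.2).1.1) }

noncomputable abbrev SU2 : Type := Matrix.specialUnitaryGroup (Fin 2) ℂ
noncomputable abbrev SU3 : Type := Matrix.specialUnitaryGroup (Fin 3) ℂ
noncomputable abbrev U3 : Type := Matrix.unitaryGroup (Fin 3) ℂ

/-- The subgroup `H_{a,b} = {(λ, q, m) ∈ U(1) × SU(2) × U(3) : λ^a (det m)^b = 1}`,
realized as the kernel of `(λ, q, m) ↦ λ^a (det m)^b`. -/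
noncomputable def detPow (a b : ℕ) : Circle × SU2 × U3 →* ℂ where
  toFun x := (x.1 : ℂ) ^ a * ((x.2.2 : Matrix (Fin 3) (Fin 3) ℂ).det) ^ b
  map_one' := by simp
  map_mul' x y := by
    simp only [Prod.fst_mul, Prod.snd_mul, Circle.coe_mul, Submonoid.coe_mul,
      Matrix.det_mul, mul_pow]
    ring

noncomputable def Hab (a b : ℕ) : Subgroup (Circle × SU2 × U3) := (detPow a b).ker

/-- The central subgroup `Z₃ = {(ζ, ζ⁻¹·1₃) : ζ ∈ U(1), ζ³ = 1}` of `U(1) × SU(3)`. -/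
noncomputable def Z3 : Subgroup (Circle × SU3) where
  carrier := {p | ∃ ζ : Circle, ζ ^ 3 = 1 ∧ p.1 = ζ ∧
    (p.2 : Matrix (Fin 3) (Fin 3) ℂ) =
      ((ζ⁻¹ : Circle) : ℂ) • (1 : Matrix (Fin 3) (Fin 3) ℂ)}
  one_mem' := ⟨1, by simp, rfl, by simp⟩
  mul_mem' := by
    rintro p q ⟨ζ, hζ, h1, h2⟩ ⟨ξ, hξ, h1', h2'⟩
    refine ⟨ζ * ξ, by rw [mul_pow, hζ, hξ, one_mul],
      by simp only [Prod.fst_mul, h1, h1'], ?_⟩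
    show (p.2 : Matrix (Fin 3) (Fin 3) ℂ) * (q.2 : Matrix (Fin 3) (Fin 3) ℂ) =
      (((ζ * ξ)⁻¹ : Circle) : ℂ) • (1 : Matrix (Fin 3) (Fin 3) ℂ)
    rw [h2, h2', smul_mul_smul_comm, one_mul, mul_inv, Circle.coe_mul]
  inv_mem' := by
    rintro p ⟨ζ, hζ, h1, h2⟩
    refine ⟨ζ⁻¹, by rw [inv_pow, hζ, inv_one], by simp [Prod.fst_inv, h1], ?_⟩
    show star (p.2 : Matrix (Fin 3) (Fin 3) ℂ) =
      ((ζ⁻¹⁻¹ : Circle) : ℂ) • (1 : Matrix (Fin 3) (Fin 3) ℂ)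
    rw [h2, star_smul, star_one, inv_inv]
    congr 1
    rw [Complex.star_def, ← Circle.coe_inv_eq_conj, inv_inv]

/-- `Z₃` consists of scalar matrices, hence is a normal subgroup. -/
noncomputable instance Z3.instNormal : Z3.Normal := by
  constructor
  rintro n ⟨ζ, hζ, h1, h2⟩ g
  refine ⟨ζ, hζ, ?_, ?_⟩
  · show g.1 * n.1 * g.1⁻¹ = ζ
    rw [h1, mul_comm g.1 ζ, mul_assoc, mul_inv_cancel, mul_one]
  · show (g.2 : Matrix (Fin 3) (Fin 3) ℂ) * (n.2 : Matrix (Fin 3) (Fin 3) ℂ) *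
        star (g.2 : Matrix (Fin 3) (Fin 3) ℂ) =
      ((ζ⁻¹ : Circle) : ℂ) • (1 : Matrix (Fin 3) (Fin 3) ℂ)
    rw [h2, mul_smul_comm, mul_one, smul_mul_assoc,
      (Matrix.mem_specialUnitaryGroup_iff.mp g.2.2).1.2]

open Matrix

lemma Circle.coe_mem_unitary (z : Circle) : (z : ℂ) ∈ unitary ℂ := by
  rw [Unitary.mem_iff, Complex.star_def, ← Circle.coe_inv_eq_conj, ← Circle.coe_mul,
    ← Circle.coe_mul, inv_mul_cancel, mul_inv_cancel, Circle.coe_one]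
  exact ⟨rfl, rfl⟩

section UnitaryGroup

variable {n : Type*} [Fintype n] [DecidableEq n]

noncomputable def unitaryGroupDet : unitaryGroup n ℂ →* Circle where
  toFun m := ⟨(m : Matrix n n ℂ).det,
    mem_sphere_zero_iff_norm.2 (CStarRing.norm_of_mem_unitary (det_of_mem_unitary m.2))⟩
  map_one' := Circle.ext det_one
  map_mul' x y := Circle.ext (det_mul x.1 y.1)

@[simp] lemma coe_unitaryGroupDet (m : unitaryGroup n ℂ) :
    (unitaryGroupDet m : ℂ) = (m : Matrix n n ℂ).det :=
  rfl

noncomputable def circleSMulSpecialUnitary :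
    Circle × specialUnitaryGroup n ℂ →* unitaryGroup n ℂ where
  toFun p := ⟨(p.1 : ℂ) • (p.2 : Matrix n n ℂ),
    Unitary.smul_mem_of_mem p.1.coe_mem_unitary (specialUnitaryGroup_le_unitaryGroup p.2.2)⟩
  map_one' := Subtype.ext (one_smul ℂ 1)
  map_mul' p q := Subtype.ext (by
    simp only [Prod.fst_mul, Prod.snd_mul, Circle.coe_mul, Submonoid.coe_mul,
      smul_mul_smul_comm])

lemma circleSMulSpecialUnitary_surjective [Nonempty n] :
    Function.Surjective (circleSMulSpecialUnitary (n := n)) := by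
  intro m
  obtain ⟨t, ht⟩ := Circle.exp_surjective (unitaryGroupDet m)
  set w := Circle.exp (t / Fintype.card n)
  have hw : w ^ Fintype.card n = unitaryGroupDet m := by
    rw [← Circle.exp_natCast_mul, mul_div_cancel₀ _ (by positivity), ht]
  refine ⟨(w, ⟨((w⁻¹ : Circle) : ℂ) • (m : Matrix n n ℂ), ?_⟩), Subtype.ext ?_⟩
  · refine mem_specialUnitaryGroup_iff.2 ⟨Unitary.smul_mem_of_mem w⁻¹.coe_mem_unitary m.2, ?_⟩
    rw [det_smul, ← coe_unitaryGroupDet, ← hw, ← Circle.coe_pow, ← Circle.coe_mul, inv_pow,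
      inv_mul_cancel, Circle.coe_one]
  · show (w : ℂ) • ((w⁻¹ : Circle) : ℂ) • (m : Matrix n n ℂ) = m
    rw [smul_smul, ← Circle.coe_mul, mul_inv_cancel, Circle.coe_one, one_smul]

end UnitaryGroup

lemma ker_circleSMulSpecialUnitary_eq_Z3 :
    (circleSMulSpecialUnitary (n := Fin 3)).ker = Z3 := by
  ext p
  constructor
  · intro hp
    have hp' : (p.1 : ℂ) • (p.2 : Matrix (Fin 3) (Fin 3) ℂ) = 1 := congrArg Subtype.val hp
    have hdet : (p.1 : ℂ) ^ 3 = 1 := by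
      simpa [det_smul, (mem_specialUnitaryGroup_iff.mp p.2.2).2] using congrArg det hp'
    refine ⟨p.1, Circle.ext (by simpa using hdet), rfl, ?_⟩
    rw [← hp', smul_smul, ← Circle.coe_mul, inv_mul_cancel, Circle.coe_one, one_smul]
  · rintro ⟨ζ, -, h1, h2⟩
    refine Subtype.ext ?_
    show (p.1 : ℂ) • (p.2 : Matrix (Fin 3) (Fin 3) ℂ) = 1
    rw [h2, h1, smul_smul, ← Circle.coe_mul, mul_inv_cancel, Circle.coe_one, one_smul]

noncomputable def quotientZ3MulEquivU3 : (Circle × SU3) ⧸ Z3 ≃* U3 :=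
  (QuotientGroup.quotientMulEquivOfEq ker_circleSMulSpecialUnitary_eq_Z3.symm).trans
    (QuotientGroup.quotientKerEquivOfSurjective _ circleSMulSpecialUnitary_surjective)

noncomputable def rootsOfUnityCircleMulEquivZMod (a : ℕ) [NeZero a] :
    rootsOfUnity a Circle ≃* Multiplicative (ZMod a) :=
  (MulEquiv.ofBijective (ZMod.rootsOfUnityAddChar a).toMonoidHom
    (by exact bijective_rootsOfUnityAddChar a)).symm

section Shear

variable {C G : Type*} [CommGroup C] [Group G]

noncomputable def mulEquivProdRootsOfUnityOfMemIff (H : Subgroup (C × G)) (d : G →* C) (a : ℕ)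
    (hH : ∀ x, x ∈ H ↔ (x.1 * d x.2) ^ a = 1) : H ≃* G × rootsOfUnity a C where
  toFun x := (x.1.2, ⟨toUnits (x.1.1 * d x.1.2), by
    rw [mem_rootsOfUnity, ← map_pow, (hH x).1 x.2, map_one]⟩)
  invFun y := ⟨(((y.2 : Cˣ) : C) * (d y.1)⁻¹, y.1), by
    rw [hH]
    simpa [Units.ext_iff] using (mem_rootsOfUnity _ _).1 y.2.2⟩
  left_inv x := by ext <;> simp
  right_inv y := by ext <;> simp
  map_mul' x y := by
    ext
    · rfl
    · simp [mul_mul_mul_comm]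

end Shear

lemma mem_Hab_mul_iff {a c : ℕ} {x : Circle × SU2 × U3} :
    x ∈ Hab a (a * c) ↔ (x.1 * unitaryGroupDet x.2.2 ^ c) ^ a = 1 := by
  rw [Hab, MonoidHom.mem_ker, ← Circle.coe_eq_one]
  simp only [detPow, MonoidHom.coe_mk, OneHom.coe_mk, Circle.coe_pow, Circle.coe_mul,
    coe_unitaryGroupDet, mul_pow, ← pow_mul, mul_comm a c]

theorem Hab_mulEquiv_quotient_prod_general (a b : ℕ) (ha : 0 < a) (hab : a ∣ b) :
    Nonempty (Hab a b ≃*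
      ((Circle × SU3) ⧸ Z3) × SU2 × Multiplicative (ZMod a)) := by
  obtain ⟨c, rfl⟩ := hab
  have : NeZero a := ⟨ha.ne'⟩
  let shear : Hab a (a * c) ≃* (SU2 × U3) × rootsOfUnity a Circle :=
    mulEquivProdRootsOfUnityOfMemIff _
      ((powMonoidHom c).comp (unitaryGroupDet.comp (MonoidHom.snd SU2 U3))) a
      fun _ ↦ mem_Hab_mul_iff
  let reorder : (SU2 × U3) × rootsOfUnity a Circle ≃* U3 × SU2 × rootsOfUnity a Circle :=
    (MulEquiv.prodComm.prodCongr (MulEquiv.refl _)).trans MulEquiv.prodAssoc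
  exact ⟨(shear.trans reorder).trans <| quotientZ3MulEquivU3.symm.prodCongr
    ((MulEquiv.refl SU2).prodCongr (rootsOfUnityCircleMulEquivZMod a))⟩

/-- **The gauge group `SU(A)` of the Standard Model algebra.**
For positive integers `a ∣ b`, there is a group isomorphism
`H_{a,b} ≅ ((U(1) × SU(3))/Z₃) × SU(2) × ℤ_a`. -/
theorem Hab_mulEquiv_quotient_prod (a b : ℕ) (ha : 0 < a) (hb : 0 < b) (hab : a ∣ b) :
    Nonempty (Hab a b ≃*
      ((Circle × SU3) ⧸ Z3) × SU2 × Multiplicative (ZMod a)) :=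
  Hab_mulEquiv_quotient_prod_general a b ha hab
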